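/- Strong duality via the co-state: suppose (z, u, χ) satisfy the optimality system ż = Az − bR⁻¹bᵀχ, χ̇ = −Aᵀχ − Qz on [0,1] with z(0) = z₀ and χ(1) = π z(1), where u = −R⁻¹bᵀχ, and define γ = −χ, ρ = Qz. Then γ̇ = −Aᵀγ + ρ and the dual objective J_D(ρ, γ) = (1/2)∫₀¹(−ρᵀQ⁻¹ρ − γᵀbR⁻¹bᵀγ)dt − γ(0)ᵀz₀ − (1/2)γ(1)ᵀπ⁻¹γ(1) equals the primal objective J_P(z, u) = (1/2)∫₀¹(zᵀQz + uᵀRu)dt + (1/2)z(1)ᵀπ z(1). -/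

import Mathlib

/-!
Along the optimality system the pairing `χ ⬝ᵥ z` of co-state and state decreases at the rate
`zᵀQz + χᵀ(bR⁻¹bᵀ)χ`, which is both the primal running cost (because `uᵀRu = χᵀ(bR⁻¹bᵀ)χ` for
the feedback control) and minus the dual running cost (because `ρᵀQ⁻¹ρ = zᵀQz` for `ρ = Qz`).
Integrating this rate over `[0, 1]` trades the running costs for the boundary values
`χ(0) ⬝ᵥ z₀` and `χ(1) ⬝ᵥ z(1)`, and the transversality condition `χ(1) = π z(1)` makes the
terminal costs of both objectives equal to `χ(1) ⬝ᵥ z(1) / 2`.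
-/

open Matrix

section Algebra

variable {ι κ R : Type*} [Fintype ι] [Fintype κ] [DecidableEq κ] [CommRing R]

theorem Matrix.nonsing_inv_mulVec_mulVec [DecidableEq ι] {A : Matrix ι ι R} (hA : IsUnit A.det)
    (x : ι → R) : A⁻¹ *ᵥ (A *ᵥ x) = x := by
  rw [mulVec_mulVec, nonsing_inv_mul _ hA, one_mulVec]

theorem Matrix.mulVec_nonsing_inv_mulVec [DecidableEq ι] {A : Matrix ι ι R} (hA : IsUnit A.det)
    (x : ι → R) : A *ᵥ (A⁻¹ *ᵥ x) = x := by
  rw [mulVec_mulVec, mul_nonsing_inv _ hA, one_mulVec]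

theorem feedback_control_cost {W : Matrix κ κ R} (hW : IsUnit W.det) (b : Matrix ι κ R)
    (χ : ι → R) :
    -(W⁻¹ *ᵥ (bᵀ *ᵥ χ)) ⬝ᵥ (W *ᵥ -(W⁻¹ *ᵥ (bᵀ *ᵥ χ))) = χ ⬝ᵥ ((b * W⁻¹ * bᵀ) *ᵥ χ) := by
  rw [mulVec_neg, neg_dotProduct, dotProduct_neg, neg_neg, mulVec_nonsing_inv_mulVec hW,
    ← mulVec_mulVec, ← mulVec_mulVec, dotProduct_mulVec χ b, ← mulVec_transpose, dotProduct_comm]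

end Algebra

theorem Continuous.matrix_nonsing_inv {X ι K : Type*} [TopologicalSpace X] [Fintype ι]
    [DecidableEq ι] [Field K] [TopologicalSpace K] [IsTopologicalDivisionRing K]
    {A : X → Matrix ι ι K} (hA : Continuous A) (hdet : ∀ x, (A x).det ≠ 0) :
    Continuous fun x => (A x)⁻¹ :=
  continuous_iff_continuousAt.2 fun x => by
    have hinv : ContinuousAt Ring.inverse (A x).det := by
      rw [Ring.inverse_eq_inv']
      exact continuousAt_inv₀ (hdet x)
    exact (continuousAt_matrix_inv _ hinv).comp hA.continuousAt

section Costate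

variable {ι 𝕜 : Type*} [Fintype ι] [NontriviallyNormedField 𝕜]

theorem HasDerivAt.dotProduct {f g : 𝕜 → ι → 𝕜} {f' g' : ι → 𝕜} {t : 𝕜}
    (hf : HasDerivAt f f' t) (hg : HasDerivAt g g' t) :
    HasDerivAt (fun s => f s ⬝ᵥ g s) (f' ⬝ᵥ g t + f t ⬝ᵥ g') t := by
  have hsum : HasDerivAt (fun s => ∑ i, f s i * g s i) (∑ i, (f' i * g t i + f t i * g' i)) t :=
    HasDerivAt.fun_sum fun i _ => (hasDerivAt_pi.1 hf i).mul (hasDerivAt_pi.1 hg i)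
  simpa only [_root_.dotProduct, Finset.sum_add_distrib] using hsum

theorem hasDerivAt_costate_dotProduct_state {A B Q : Matrix ι ι 𝕜} {z χ : 𝕜 → ι → 𝕜} {t : 𝕜}
    (hz : HasDerivAt z (A *ᵥ z t - B *ᵥ χ t) t)
    (hχ : HasDerivAt χ (-(Aᵀ *ᵥ χ t) - Q *ᵥ z t) t) :
    HasDerivAt (fun s => χ s ⬝ᵥ z s) (-(z t ⬝ᵥ (Q *ᵥ z t) + χ t ⬝ᵥ (B *ᵥ χ t))) t := by
  convert hχ.dotProduct hz using 1
  rw [sub_dotProduct, neg_dotProduct, dotProduct_sub, mulVec_transpose, ← dotProduct_mulVec,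
    dotProduct_comm (Q *ᵥ z t)]
  ring

theorem integral_costate_dissipation {a b : ℝ}
    {A B Q : ℝ → Matrix ι ι ℝ} {z χ : ℝ → ι → ℝ}
    (hB : Continuous B) (hQ : Continuous Q) (hz : Continuous z) (hχ : Continuous χ)
    (hzode : ∀ t ∈ Set.uIcc a b, HasDerivAt z (A t *ᵥ z t - B t *ᵥ χ t) t)
    (hχode : ∀ t ∈ Set.uIcc a b, HasDerivAt χ (-((A t)ᵀ *ᵥ χ t) - Q t *ᵥ z t) t) :
    ∫ t in a..b, (z t ⬝ᵥ (Q t *ᵥ z t) + χ t ⬝ᵥ (B t *ᵥ χ t)) = χ a ⬝ᵥ z a - χ b ⬝ᵥ z b := by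
  have hderiv : ∀ t ∈ Set.uIcc a b, HasDerivAt (fun s => -(χ s ⬝ᵥ z s))
      (z t ⬝ᵥ (Q t *ᵥ z t) + χ t ⬝ᵥ (B t *ᵥ χ t)) t := fun t ht => by
    simpa only [neg_neg] using
      (hasDerivAt_costate_dotProduct_state (hzode t ht) (hχode t ht)).fun_neg
  have hcont : Continuous fun t => z t ⬝ᵥ (Q t *ᵥ z t) + χ t ⬝ᵥ (B t *ᵥ χ t) :=
    (hz.dotProduct (hQ.matrix_mulVec hz)).add (hχ.dotProduct (hB.matrix_mulVec hχ))
  rw [intervalIntegral.integral_eq_sub_of_hasDerivAt hderiv (hcont.intervalIntegrable a b)]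
  ring

end Costate

theorem stmt_6_general {n k : ℕ}
    (A : ℝ → Matrix (Fin n) (Fin n) ℝ) (b : ℝ → Matrix (Fin n) (Fin k) ℝ)
    (Q : ℝ → Matrix (Fin n) (Fin n) ℝ) (R : ℝ → Matrix (Fin k) (Fin k) ℝ)
    (π : Matrix (Fin n) (Fin n) ℝ)
    (hb : Continuous b) (hQ : Continuous Q) (hR : Continuous R)
    (hQpd : ∀ t, (Q t).PosDef) (hRpd : ∀ t, (R t).PosDef) (hπ : π.PosDef)
    (z χ : ℝ → Fin n → ℝ) (u : ℝ → Fin k → ℝ)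
    (hzc : Continuous z) (hχc : Continuous χ)
    (z₀ : Fin n → ℝ) (hz0 : z 0 = z₀) (hχ1 : χ 1 = π *ᵥ z 1)
    (hudef : ∀ t, u t = -((R t)⁻¹ *ᵥ ((b t)ᵀ *ᵥ χ t)))
    (hzode : ∀ t ∈ Set.Icc (0:ℝ) 1,
      HasDerivAt z (A t *ᵥ z t - (b t * (R t)⁻¹ * (b t)ᵀ) *ᵥ χ t) t)
    (hχode : ∀ t ∈ Set.Icc (0:ℝ) 1,
      HasDerivAt χ (-((A t)ᵀ *ᵥ χ t) - Q t *ᵥ z t) t) :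
    (∀ t ∈ Set.Icc (0:ℝ) 1,
      HasDerivAt (fun s => -χ s) (-((A t)ᵀ *ᵥ (-χ t)) + Q t *ᵥ z t) t) ∧
    (1/2) * (∫ t in (0:ℝ)..1,
        (-((Q t *ᵥ z t) ⬝ᵥ ((Q t)⁻¹ *ᵥ (Q t *ᵥ z t)))
          - (-χ t) ⬝ᵥ ((b t * (R t)⁻¹ * (b t)ᵀ) *ᵥ (-χ t))))
      - (-χ 0) ⬝ᵥ z₀ - (1/2) * ((-χ 1) ⬝ᵥ (π⁻¹ *ᵥ (-χ 1)))
    = (1/2) * (∫ t in (0:ℝ)..1, (z t ⬝ᵥ (Q t *ᵥ z t) + u t ⬝ᵥ (R t *ᵥ u t)))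
      + (1/2) * (z 1 ⬝ᵥ (π *ᵥ z 1)) := by
  refine ⟨fun t ht => ?_, ?_⟩
  · refine (hχode t ht).fun_neg.congr_deriv ?_
    rw [mulVec_neg, neg_neg, neg_sub, sub_eq_neg_add, neg_neg]
  have hQdet t : IsUnit (Q t).det := (isUnit_iff_isUnit_det _).1 (hQpd t).isUnit
  have hRdet t : IsUnit (R t).det := (isUnit_iff_isUnit_det _).1 (hRpd t).isUnit
  have hπdet : IsUnit π.det := (isUnit_iff_isUnit_det _).1 hπ.isUnit
  have hB : Continuous fun t => b t * (R t)⁻¹ * (b t)ᵀ :=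
    (hb.matrix_mul (hR.matrix_nonsing_inv fun t => (hRdet t).ne_zero)).matrix_mul
      hb.matrix_transpose
  rw [← Set.uIcc_of_le zero_le_one] at hzode hχode
  have hdiss := integral_costate_dissipation hB hQ hzc hχc hzode hχode
  have hprimal t : z t ⬝ᵥ (Q t *ᵥ z t) + u t ⬝ᵥ (R t *ᵥ u t)
      = z t ⬝ᵥ (Q t *ᵥ z t) + χ t ⬝ᵥ ((b t * (R t)⁻¹ * (b t)ᵀ) *ᵥ χ t) := by
    rw [hudef, feedback_control_cost (hRdet t)]
  have hdual t : -((Q t *ᵥ z t) ⬝ᵥ ((Q t)⁻¹ *ᵥ (Q t *ᵥ z t)))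
      - (-χ t) ⬝ᵥ ((b t * (R t)⁻¹ * (b t)ᵀ) *ᵥ (-χ t))
      = -(z t ⬝ᵥ (Q t *ᵥ z t) + χ t ⬝ᵥ ((b t * (R t)⁻¹ * (b t)ᵀ) *ᵥ χ t)) := by
    rw [nonsing_inv_mulVec_mulVec (hQdet t), dotProduct_comm, mulVec_neg, neg_dotProduct,
      dotProduct_neg, neg_neg, neg_add']
  simp only [hprimal, hdual]
  rw [intervalIntegral.integral_neg, hdiss, ← hz0, hχ1, mulVec_neg,
    nonsing_inv_mulVec_mulVec hπdet, dotProduct_comm (z 1)]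
  simp only [neg_dotProduct, dotProduct_neg]
  ring

/-- Strong duality via the co-state: `γ = −χ`, `ρ = Qz` is dual feasible and the dual
objective equals the primal objective. -/
theorem stmt_6 {n k : ℕ}
    (A : ℝ → Matrix (Fin n) (Fin n) ℝ) (b : ℝ → Matrix (Fin n) (Fin k) ℝ)
    (Q : ℝ → Matrix (Fin n) (Fin n) ℝ) (R : ℝ → Matrix (Fin k) (Fin k) ℝ)
    (π : Matrix (Fin n) (Fin n) ℝ)
    (hA : Continuous A) (hb : Continuous b) (hQ : Continuous Q) (hR : Continuous R)
    (hQpd : ∀ t, (Q t).PosDef) (hRpd : ∀ t, (R t).PosDef) (hπ : π.PosDef)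
    (z χ : ℝ → Fin n → ℝ) (u : ℝ → Fin k → ℝ)
    (hzc : Continuous z) (hχc : Continuous χ)
    (z₀ : Fin n → ℝ) (hz0 : z 0 = z₀) (hχ1 : χ 1 = π *ᵥ z 1)
    (hudef : ∀ t, u t = -((R t)⁻¹ *ᵥ ((b t)ᵀ *ᵥ χ t)))
    (hzode : ∀ t ∈ Set.Icc (0:ℝ) 1,
      HasDerivAt z (A t *ᵥ z t - (b t * (R t)⁻¹ * (b t)ᵀ) *ᵥ χ t) t)
    (hχode : ∀ t ∈ Set.Icc (0:ℝ) 1,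
      HasDerivAt χ (-((A t)ᵀ *ᵥ χ t) - Q t *ᵥ z t) t) :
    (∀ t ∈ Set.Icc (0:ℝ) 1,
      HasDerivAt (fun s => -χ s) (-((A t)ᵀ *ᵥ (-χ t)) + Q t *ᵥ z t) t) ∧
    (1/2) * (∫ t in (0:ℝ)..1,
        (-((Q t *ᵥ z t) ⬝ᵥ ((Q t)⁻¹ *ᵥ (Q t *ᵥ z t)))
          - (-χ t) ⬝ᵥ ((b t * (R t)⁻¹ * (b t)ᵀ) *ᵥ (-χ t))))
      - (-χ 0) ⬝ᵥ z₀ - (1/2) * ((-χ 1) ⬝ᵥ (π⁻¹ *ᵥ (-χ 1)))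
    = (1/2) * (∫ t in (0:ℝ)..1, (z t ⬝ᵥ (Q t *ᵥ z t) + u t ⬝ᵥ (R t *ᵥ u t)))
      + (1/2) * (z 1 ⬝ᵥ (π *ᵥ z 1)) :=
  stmt_6_general A b Q R π hb hQ hR hQpd hRpd hπ z χ u hzc hχc z₀ hz0 hχ1 hudef hzode hχode
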